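/- Let (K_m) and (b_m) be bounded complex sequences, λ > 0, and λ_n = −i·(n(g+n²)tanh(hn))^{1/2}. Define k_n := λ·∑_{m ≠ n} K_m b_m/(λ_m − λ_n + λ) (the series converges absolutely). Then for every ε ∈ [0, 1/2) the sequence (k_n · n^ε) is bounded. -/

import Mathlib

/-!
Write `μ_n = √(n (g + n²) tanh (h n))`, so that `λ_m - λ_n + λ = λ + i (μ_n - μ_m)` has modulus at
least `|μ_m - μ_n|`. For `1 ≤ m ≤ n` we have `μ_n² - μ_m² ≥ tanh h · (n - m) n²` and
`μ_n + μ_m ≤ 2 √(g + 1) n^(3/2)`, so the eigenvalues are separated: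
`|μ_m - μ_n| ≥ c |m - n| √(max m n)` with `c = tanh h / (2 √(g + 1))`.
Hence `|k_n| ≲ ∑_{m ≠ n} 1 / (|m - n| √(max m n))`. The terms with `m ≤ 2n` contribute at most
`2 H_n / √n`, and beyond `2n` the terms are `≤ 2 m^(-3/2)`, whose tail telescopes to `O(1/√n)`.
So `|k_n| ≲ (1 + log n) / √n`, and `log n ≤ n^δ / δ` with `δ = 1/2 - ε` absorbs the logarithm.
-/

open Finset Real

namespace Real

theorem tanh_monotone : Monotone tanh := by
  intro x y hxy
  rw [tanh_eq_sinh_div_cosh, tanh_eq_sinh_div_cosh, div_le_div_iff₀ (cosh_pos x) (cosh_pos y)]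
  have h := sinh_sub x y
  have : sinh (x - y) ≤ 0 := sinh_nonpos_iff.2 (by linarith)
  linarith

theorem tanh_nonneg {x : ℝ} (hx : 0 ≤ x) : 0 ≤ tanh x := by
  simpa using tanh_monotone hx

theorem tanh_pos {x : ℝ} (hx : 0 < x) : 0 < tanh x := by
  rw [tanh_eq_sinh_div_cosh]
  exact div_pos (sinh_pos_iff.2 hx) (cosh_pos x)

end Real

theorem sum_range_inv_abs_sub (n : ℕ) :
    ∑ m ∈ range (2 * n + 1), |(m : ℝ) - n|⁻¹ = 2 * harmonic n := by
  have hlow : ∑ m ∈ range n, |(m : ℝ) - n|⁻¹ = harmonic n := by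
    rw [← sum_range_reflect, harmonic]
    push_cast
    refine sum_congr rfl fun i hi ↦ ?_
    rw [Nat.cast_sub (by simp at hi; omega), Nat.cast_sub (by simp at hi; omega), Nat.cast_one,
      show ((n : ℝ) - 1 - i - n) = -(i + 1) by ring, abs_neg, abs_of_pos (by positivity)]
  have hhigh : ∑ i ∈ range (n + 1), |((n + i : ℕ) : ℝ) - n|⁻¹ = harmonic n := by
    rw [sum_range_succ', harmonic]
    push_cast
    simp only [sub_self, abs_zero, inv_zero, add_zero]
    exact sum_congr rfl fun i _ ↦ by rw [add_sub_cancel_left, abs_of_pos (by positivity)]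
  rw [show 2 * n + 1 = n + (n + 1) by ring, sum_range_add, hlow, hhigh]
  ring

theorem inv_mul_sqrt_le_sub {x : ℝ} (hx : 0 < x) :
    ((x + 1) * √(x + 1))⁻¹ ≤ 2 / √x - 2 / √(x + 1) := by
  set u := √x
  set v := √(x + 1)
  have hu : 0 < u := sqrt_pos.2 hx
  have hv : 0 < v := sqrt_pos.2 (by linarith)
  have huv : u ≤ v := sqrt_le_sqrt (by linarith)
  have hu2 : u ^ 2 = x := sq_sqrt hx.le
  have hv2 : v ^ 2 = x + 1 := sq_sqrt (by linarith)
  have hdiff : 2 / u - 2 / v = 2 / (u * v * (u + v)) := by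
    field_simp
    linear_combination hv2 - hu2
  rw [hdiff, ← hv2, inv_eq_one_div, div_le_div_iff₀ (by positivity) (by positivity)]
  nlinarith [mul_le_mul huv huv hu.le (by linarith), mul_pos hu hu]

theorem sum_range_inv_mul_sqrt_le {N : ℝ} (hN : 0 < N) (L : ℕ) :
    ∑ i ∈ range L, ((N + i + 1) * √(N + i + 1))⁻¹ ≤ 2 / √N := by
  calc ∑ i ∈ range L, ((N + i + 1) * √(N + i + 1))⁻¹
      ≤ ∑ i ∈ range L, (2 / √(N + i) - 2 / √(N + (i + 1 : ℕ))) :=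
        sum_le_sum fun i _ ↦ by
          push_cast
          simp only [← add_assoc]
          exact inv_mul_sqrt_le_sub (by positivity)
    _ = 2 / √N - 2 / √(N + L) := by rw [sum_range_sub']; simp
    _ ≤ 2 / √N := by
        have : 0 ≤ 2 / √(N + L) := by positivity
        linarith

theorem add_log_div_sqrt_mul_rpow_le {a x ε : ℝ} (ha : 0 ≤ a) (hx : 1 ≤ x) (hε : ε < 1 / 2) :
    (a + log x) / √x * x ^ ε ≤ a + (1 / 2 - ε)⁻¹ := by
  have hδ : 0 < 1 / 2 - ε := by linarith
  have hx0 : 0 < x := by linarith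
  have hxδ : 1 ≤ x ^ (1 / 2 - ε) := one_le_rpow hx hδ.le
  have hrpow : x ^ ε / √x = (x ^ (1 / 2 - ε))⁻¹ := by
    rw [sqrt_eq_rpow, ← rpow_sub hx0, ← rpow_neg hx0.le, neg_sub]
  rw [div_mul_eq_mul_div, mul_div_assoc, hrpow, add_mul]
  gcongr
  · exact mul_le_of_le_one_right ha (inv_le_one_of_one_le₀ hxδ)
  · rw [← div_eq_mul_inv, div_le_iff₀ (by positivity), inv_mul_eq_div]
    exact log_le_rpow_div hx0.le hδ

noncomputable def waterWaveFreq (g h x : ℝ) : ℝ := √(x * (g + x ^ 2) * tanh (h * x))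

noncomputable def waterWaveGapConst (g h : ℝ) : ℝ := tanh h / (2 * √(g + 1))

theorem waterWaveGapConst_pos {g h : ℝ} (hg : 0 ≤ g) (hh : 0 < h) : 0 < waterWaveGapConst g h := by
  have := tanh_pos hh
  unfold waterWaveGapConst
  positivity

theorem waterWaveFreq_sq {g h x : ℝ} (hg : 0 ≤ g) (hh : 0 ≤ h) (hx : 0 ≤ x) :
    waterWaveFreq g h x ^ 2 = x * (g + x ^ 2) * tanh (h * x) :=
  sq_sqrt (mul_nonneg (by positivity) (tanh_nonneg (by positivity)))

theorem waterWaveFreq_pos {g h x : ℝ} (hg : 0 ≤ g) (hh : 0 < h) (hx : 0 < x) :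
    0 < waterWaveFreq g h x :=
  sqrt_pos.2 (mul_pos (by positivity) (tanh_pos (by positivity)))

theorem waterWaveFreq_le {g h y : ℝ} (hg : 0 ≤ g) (hy : 1 ≤ y) :
    waterWaveFreq g h y ≤ √(g + 1) * (y * √y) := by
  have hP : y * (g + y ^ 2) ≤ (g + 1) * y ^ 3 := by
    nlinarith [mul_le_mul_of_nonneg_left (le_self_pow₀ hy (by norm_num) : y ≤ y ^ 3) hg]
  calc waterWaveFreq g h y ≤ √((g + 1) * y ^ 3) := by
        exact sqrt_le_sqrt ((mul_le_of_le_one_right (by positivity) (tanh_lt_one _).le).trans hP)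
    _ = √(g + 1) * (y * √y) := by
        rw [sqrt_mul (by linarith), pow_succ, sqrt_mul (by positivity), sqrt_sq (by linarith)]

theorem waterWaveFreq_sq_sub_ge {g h x y : ℝ} (hg : 0 ≤ g) (hh : 0 ≤ h) (hx : 1 ≤ x)
    (hxy : x ≤ y) :
    tanh h * (y - x) * y ^ 2 ≤ waterWaveFreq g h y ^ 2 - waterWaveFreq g h x ^ 2 := by
  rw [waterWaveFreq_sq hg hh (by linarith), waterWaveFreq_sq hg hh (by linarith)]
  have hTx : tanh h ≤ tanh (h * x) := tanh_monotone (by nlinarith)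
  have hTxy : tanh (h * x) ≤ tanh (h * y) := tanh_monotone (by nlinarith)
  have hPy : 0 ≤ y * (g + y ^ 2) := mul_nonneg (by linarith) (by positivity)
  have hP_sub : (y - x) * y ^ 2 ≤ y * (g + y ^ 2) - x * (g + x ^ 2) := by
    nlinarith [mul_nonneg (sub_nonneg.2 hxy) (by nlinarith : 0 ≤ x * (x + y)),
      mul_nonneg hg (sub_nonneg.2 hxy)]
  calc tanh h * (y - x) * y ^ 2 ≤ tanh (h * x) * (y * (g + y ^ 2) - x * (g + x ^ 2)) := by
        rw [mul_assoc]
        exact mul_le_mul hTx hP_sub (by nlinarith) (tanh_nonneg (by nlinarith))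
    _ ≤ _ := by nlinarith [mul_le_mul_of_nonneg_left hTxy hPy]

theorem waterWaveFreq_sub_ge {g h x y : ℝ} (hg : 0 ≤ g) (hh : 0 < h) (hx : 1 ≤ x)
    (hxy : x ≤ y) :
    waterWaveGapConst g h * (y - x) * √y ≤ waterWaveFreq g h y - waterWaveFreq g h x := by
  set μx := waterWaveFreq g h x
  set μy := waterWaveFreq g h y
  have hT : 0 < tanh h := tanh_pos hh
  have hsq := waterWaveFreq_sq_sub_ge hg hh.le hx hxy
  have hμy : μy ≤ √(g + 1) * (y * √y) := waterWaveFreq_le hg (hx.trans hxy)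
  have hμy0 : 0 < μy := waterWaveFreq_pos hg hh (by linarith)
  have hμx0 : 0 ≤ μx := sqrt_nonneg _
  have hμ_le : μx ≤ μy := by
    nlinarith [mul_nonneg (mul_nonneg hT.le (sub_nonneg.2 hxy)) (sq_nonneg y)]
  refine le_of_mul_le_mul_right ?_ (by linarith : 0 < μy + μx)
  calc waterWaveGapConst g h * (y - x) * √y * (μy + μx)
      ≤ waterWaveGapConst g h * (y - x) * √y * (2 * (√(g + 1) * (y * √y))) := by
        have := waterWaveGapConst_pos hg hh
        gcongr
        linarith
    _ = tanh h * (y - x) * y ^ 2 := by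
        have : 0 < √(g + 1) := sqrt_pos.2 (by linarith)
        rw [waterWaveGapConst]
        field_simp
        rw [sq_sqrt (by linarith)]
        ring
    _ ≤ μy ^ 2 - μx ^ 2 := hsq
    _ = (μy - μx) * (μy + μx) := by ring

theorem abs_waterWaveFreq_sub_ge {g h x y : ℝ} (hg : 0 ≤ g) (hh : 0 < h) (hx : 1 ≤ x)
    (hy : 1 ≤ y) :
    waterWaveGapConst g h * |x - y| * √(max x y) ≤ |waterWaveFreq g h x - waterWaveFreq g h y| := by
  rcases le_total x y with hxy | hyx
  · rw [abs_sub_comm x, abs_of_nonneg (sub_nonneg.2 hxy), max_eq_right hxy, abs_sub_comm]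
    exact (waterWaveFreq_sub_ge hg hh hx hxy).trans (le_abs_self _)
  · rw [abs_of_nonneg (sub_nonneg.2 hyx), max_eq_left hyx]
    exact (waterWaveFreq_sub_ge hg hh hy hyx).trans (le_abs_self _)

/-- At `m = n` this is `0⁻¹ = 0`. -/
noncomputable def gapWeight (n m : ℕ) : ℝ := (|(m : ℝ) - n| * √(max (m : ℝ) n))⁻¹

theorem gapWeight_nonneg (n m : ℕ) : 0 ≤ gapWeight n m := by
  unfold gapWeight
  positivity

theorem gapWeight_le_inv_abs_sub_div_sqrt {n : ℕ} (hn : 1 ≤ n) (m : ℕ) :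
    gapWeight n m ≤ |(m : ℝ) - n|⁻¹ / √n := by
  rw [gapWeight, mul_inv, div_eq_mul_inv]
  gcongr
  exact le_max_right _ _

theorem gapWeight_le_of_two_mul_lt {n m : ℕ} (hnm : 2 * n < m) :
    gapWeight n m ≤ 2 * ((m : ℝ) * √m)⁻¹ := by
  have hnm' : 2 * (n : ℝ) + 1 ≤ m := by exact_mod_cast hnm
  have hm : (0 : ℝ) < m := by linarith [(n.cast_nonneg : (0 : ℝ) ≤ n)]
  rw [gapWeight, max_eq_left (by linarith), abs_of_pos (by linarith),
    show 2 * ((m : ℝ) * √m)⁻¹ = ((m / 2) * √m)⁻¹ by field_simp]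
  gcongr
  linarith

theorem sum_range_gapWeight_le {n : ℕ} (hn : 1 ≤ n) (N : ℕ) :
    ∑ m ∈ range N, gapWeight n m ≤ 2 * (3 + log n) / √n := by
  have hn0 : (0 : ℝ) < n := by exact_mod_cast hn
  have hsqrt : 0 < √(n : ℝ) := sqrt_pos.2 hn0
  have hnear : ∑ m ∈ range (2 * n + 1), gapWeight n m ≤ 2 * (1 + log n) / √n :=
    calc ∑ m ∈ range (2 * n + 1), gapWeight n m
        ≤ ∑ m ∈ range (2 * n + 1), |(m : ℝ) - n|⁻¹ / √n :=
          sum_le_sum fun m _ ↦ gapWeight_le_inv_abs_sub_div_sqrt hn m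
      _ = 2 * harmonic n / √n := by rw [← sum_div, sum_range_inv_abs_sub]
      _ ≤ 2 * (1 + log n) / √n := by gcongr; exact harmonic_le_one_add_log n
  have hfar (L : ℕ) : ∑ i ∈ range L, gapWeight n (2 * n + 1 + i) ≤ 4 / √n :=
    calc ∑ i ∈ range L, gapWeight n (2 * n + 1 + i)
        ≤ ∑ i ∈ range L, 2 * ((2 * n + i + 1 : ℝ) * √(2 * n + i + 1))⁻¹ :=
          sum_le_sum fun i _ ↦ by
            have := gapWeight_le_of_two_mul_lt (n := n) (m := 2 * n + 1 + i) (by omega)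
            push_cast at this
            rwa [show (2 * n + i + 1 : ℝ) = 2 * n + 1 + i by ring]
      _ = 2 * ∑ i ∈ range L, ((2 * n + i + 1 : ℝ) * √(2 * n + i + 1))⁻¹ := by rw [mul_sum]
      _ ≤ 2 * (2 / √(2 * n)) := by gcongr; exact sum_range_inv_mul_sqrt_le (by positivity) L
      _ ≤ 2 * (2 / √n) := by gcongr; linarith
      _ = 4 / √n := by ring
  calc ∑ m ∈ range N, gapWeight n m ≤ ∑ m ∈ range (2 * n + 1 + N), gapWeight n m :=
        sum_le_sum_of_subset_of_nonneg (range_subset_range.2 (by omega))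
          fun m _ _ ↦ gapWeight_nonneg n m
    _ ≤ 2 * (1 + log n) / √n + 4 / √n := by rw [sum_range_add]; exact add_le_add hnear (hfar N)
    _ = 2 * (3 + log n) / √n := by ring

theorem norm_div_waterWave_denom_le {g h : ℝ} (hg : 0 ≤ g) (hh : 0 < h) (lam0 : ℝ) (z : ℂ)
    {m n : ℕ} (hm : 1 ≤ m) (hn : 1 ≤ n) (hmn : m ≠ n) :
    ‖z / (-Complex.I * waterWaveFreq g h m - -Complex.I * waterWaveFreq g h n + lam0)‖
      ≤ ‖z‖ / waterWaveGapConst g h * gapWeight n m := by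
  set d := waterWaveGapConst g h * |(m : ℝ) - n| * √(max (m : ℝ) n)
  have hd : 0 < d := by
    have := waterWaveGapConst_pos hg hh
    have : (m : ℝ) ≠ n := by exact_mod_cast hmn
    have : 0 < √(max (m : ℝ) n) := sqrt_pos.2 (lt_max_of_lt_left (by exact_mod_cast hm))
    positivity
  have hd_le : d ≤ ‖-Complex.I * waterWaveFreq g h m - -Complex.I * waterWaveFreq g h n + lam0‖ :=
    calc d ≤ |waterWaveFreq g h m - waterWaveFreq g h n| :=
          abs_waterWaveFreq_sub_ge hg hh (by exact_mod_cast hm) (by exact_mod_cast hn)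
      _ = |(-Complex.I * waterWaveFreq g h m - -Complex.I * waterWaveFreq g h n + lam0).im| := by
          rw [abs_sub_comm]
          simp only [Complex.add_im, Complex.sub_im, Complex.mul_im, Complex.ofReal_im,
            Complex.ofReal_re, Complex.neg_re, Complex.neg_im, Complex.I_re, Complex.I_im]
          ring_nf
      _ ≤ _ := Complex.abs_im_le_norm _
  rw [norm_div, gapWeight, ← div_eq_mul_inv, div_div, ← mul_assoc]
  exact div_le_div_of_nonneg_left (norm_nonneg z) hd hd_le

theorem norm_ite_mul_div_waterWave_denom_le {g h : ℝ} (hg : 0 ≤ g) (hh : 0 < h) {lam : ℕ → ℂ}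
    (hlam : ∀ n : ℕ, lam n = -Complex.I * waterWaveFreq g h n) (lam0 : ℝ) {z : ℕ → ℂ} {Q : ℝ}
    (hz : ∀ m, ‖z m‖ ≤ Q) {n : ℕ} (hn : 1 ≤ n) (m : ℕ) :
    ‖if m = 0 ∨ m = n then 0 else (lam0 : ℂ) * (z m / (lam m - lam n + lam0))‖
      ≤ |lam0| * Q / waterWaveGapConst g h * gapWeight n m := by
  have hc := waterWaveGapConst_pos hg hh
  split_ifs with hm
  · simpa using mul_nonneg (div_nonneg (mul_nonneg (abs_nonneg lam0)
      ((norm_nonneg _).trans (hz 0))) hc.le) (gapWeight_nonneg n m)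
  rw [not_or] at hm
  calc ‖(lam0 : ℂ) * (z m / (lam m - lam n + lam0))‖
      = |lam0| * ‖z m / (lam m - lam n + lam0)‖ := by
        rw [norm_mul, Complex.norm_real, Real.norm_eq_abs]
    _ ≤ |lam0| * (‖z m‖ / waterWaveGapConst g h * gapWeight n m) := by
        gcongr
        rw [hlam, hlam]
        exact norm_div_waterWave_denom_le hg hh lam0 _ (Nat.one_le_iff_ne_zero.2 hm.1) hn hm.2
    _ ≤ |lam0| * (Q / waterWaveGapConst g h * gapWeight n m) := by
        gcongr
        · exact gapWeight_nonneg n m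
        exact hz m
    _ = |lam0| * Q / waterWaveGapConst g h * gapWeight n m := by ring

theorem stmt15_general (g h : ℝ) (hg : 0 < g) (hh : 0 < h)
    (lam : ℕ → ℂ)
    (hlam : ∀ n : ℕ, lam n =
      -Complex.I * Real.sqrt ((n : ℝ) * (g + (n : ℝ) ^ 2) * Real.tanh (h * n)))
    (lam0 : ℝ)
    (K b : ℕ → ℂ) (MK Mb : ℝ)
    (hK : ∀ m, ‖K m‖ ≤ MK) (hb : ∀ m, ‖b m‖ ≤ Mb)
    (k : ℕ → ℂ)
    (hk : ∀ n : ℕ, 1 ≤ n → HasSum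
      (fun m : ℕ => if m = 0 ∨ m = n then 0
        else (lam0 : ℂ) * (K m * b m / (lam m - lam n + (lam0 : ℂ)))) (k n)) :
    ∀ ε : ℝ, 0 ≤ ε → ε < 1 / 2 →
      ∃ M : ℝ, ∀ n : ℕ, 1 ≤ n → ‖k n‖ * (n : ℝ) ^ ε ≤ M := by
  intro ε _ hε
  set C := |lam0| * (MK * Mb) / waterWaveGapConst g h
  have hC : 0 ≤ C := div_nonneg (mul_nonneg (abs_nonneg lam0)
    (mul_nonneg ((norm_nonneg _).trans (hK 0)) ((norm_nonneg _).trans (hb 0))))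
    (waterWaveGapConst_pos hg.le hh).le
  refine ⟨2 * C * (3 + (1 / 2 - ε)⁻¹), fun n hn ↦ ?_⟩
  have hterm := norm_ite_mul_div_waterWave_denom_le hg.le hh hlam lam0
    (fun m ↦ norm_mul_le_of_le (hK m) (hb m)) hn
  have hsum : HasSum (fun m ↦ C * gapWeight n m) (C * ∑' m, gapWeight n m) :=
    (summable_of_sum_range_le (gapWeight_nonneg n) (sum_range_gapWeight_le hn)).hasSum.mul_left C
  calc ‖k n‖ * (n : ℝ) ^ ε ≤ C * (2 * (3 + log n) / √n) * (n : ℝ) ^ ε := by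
        gcongr
        refine ((hk n hn).norm_le_of_bounded hsum hterm).trans ?_
        gcongr
        exact Real.tsum_le_of_sum_range_le (gapWeight_nonneg n) (sum_range_gapWeight_le hn)
    _ = 2 * C * ((3 + log n) / √n * (n : ℝ) ^ ε) := by ring
    _ ≤ 2 * C * (3 + (1 / 2 - ε)⁻¹) := by
        gcongr
        exact add_log_div_sqrt_mul_rpow_le (by norm_num) (by exact_mod_cast hn) hε

/-- If (K_m) and (b_m) are bounded and k_n = λ·∑_{m ≠ n} K_m b_m/(λ_m − λ_n + λ), then
(k_n · n^ε) is bounded for every ε ∈ [0, 1/2). -/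
theorem stmt15 (g h : ℝ) (hg : 0 < g) (hh : 0 < h)
    (lam : ℕ → ℂ)
    (hlam : ∀ n : ℕ, lam n =
      -Complex.I * Real.sqrt ((n : ℝ) * (g + (n : ℝ) ^ 2) * Real.tanh (h * n)))
    (lam0 : ℝ) (hlam0 : 0 < lam0)
    (K b : ℕ → ℂ) (MK Mb : ℝ)
    (hK : ∀ m, ‖K m‖ ≤ MK) (hb : ∀ m, ‖b m‖ ≤ Mb)
    (k : ℕ → ℂ)
    (hk : ∀ n : ℕ, 1 ≤ n → HasSum
      (fun m : ℕ => if m = 0 ∨ m = n then 0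
        else (lam0 : ℂ) * (K m * b m / (lam m - lam n + (lam0 : ℂ)))) (k n)) :
    ∀ ε : ℝ, 0 ≤ ε → ε < 1 / 2 →
      ∃ M : ℝ, ∀ n : ℕ, 1 ≤ n → ‖k n‖ * (n : ℝ) ^ ε ≤ M :=
  stmt15_general g h hg hh lam hlam lam0 K b MK Mb hK hb k hk
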